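/- arXiv:math/0501408 — 2 statements merged into one kernel-verified Lean document; each statement's English description precedes it below -/
import Mathlib

section
/- Let ξ, ξ₁, ξ₂, τ, τ₁, τ₂ be real numbers with ξ = ξ₁ + ξ₂ and τ = τ₁ + τ₂. Set σ = τ − ξ³, σ₁ = τ₁ − ξ₁², σ₂ = τ₂ + ξ₂². If |ξ² + ξ − 2ξ₁| ≥ ξ²/2, then |σ| + |σ₁| + |σ₂| ≥ |ξ|³/2. -/
theorem resonance_inequality (ξ ξ₁ ξ₂ τ τ₁ τ₂ : ℝ)
    (hξ : ξ = ξ₁ + ξ₂) (hτ : τ = τ₁ + τ₂)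
    (h : |ξ ^ 2 + ξ - 2 * ξ₁| ≥ ξ ^ 2 / 2) :
    |τ - ξ ^ 3| + |τ₁ - ξ₁ ^ 2| + |τ₂ + ξ₂ ^ 2| ≥ |ξ| ^ 3 / 2 := by
  have key : (τ - ξ ^ 3) - (τ₁ - ξ₁ ^ 2) - (τ₂ + ξ₂ ^ 2)
      = -ξ * (ξ ^ 2 + ξ - 2 * ξ₁) := by subst hξ hτ; ring
  have h1 : |ξ| ^ 3 / 2 ≤ |(τ - ξ ^ 3) - (τ₁ - ξ₁ ^ 2) - (τ₂ + ξ₂ ^ 2)| := by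
    rw [key, abs_mul, abs_neg]
    calc |ξ| ^ 3 / 2 = |ξ| * (ξ ^ 2 / 2) := by rw [← sq_abs]; ring
    _ ≤ |ξ| * |ξ ^ 2 + ξ - 2 * ξ₁| := by
        exact mul_le_mul_of_nonneg_left h (abs_nonneg _)
  calc |ξ| ^ 3 / 2 ≤ |(τ - ξ ^ 3) - (τ₁ - ξ₁ ^ 2) - (τ₂ + ξ₂ ^ 2)| := h1
  _ ≤ |τ - ξ ^ 3| + |τ₁ - ξ₁ ^ 2| + |τ₂ + ξ₂ ^ 2| := by
      have := abs_sub (τ - ξ ^ 3 - (τ₁ - ξ₁ ^ 2)) (τ₂ + ξ₂ ^ 2)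
      have := abs_sub (τ - ξ ^ 3) (τ₁ - ξ₁ ^ 2)
      calc |(τ - ξ ^ 3) - (τ₁ - ξ₁ ^ 2) - (τ₂ + ξ₂ ^ 2)|
          ≤ |(τ - ξ ^ 3) - (τ₁ - ξ₁ ^ 2)| + |τ₂ + ξ₂ ^ 2| := abs_sub _ _
        _ ≤ |τ - ξ ^ 3| + |τ₁ - ξ₁ ^ 2| + |τ₂ + ξ₂ ^ 2| := by
            linarith [abs_sub (τ - ξ ^ 3) (τ₁ - ξ₁ ^ 2)]
end

section
/- Let ψ ∈ C₀^∞(ℝ) and for 0 < δ ≤ 1 set ψ_δ(t) = ψ(t/δ). Then for 1/2 > b > b′ ≥ 0, ‖ψ_δ‖_{H^{1/2−(b−b′)}(ℝ)} ≤ C δ^{b−b′} for a constant C depending only on ψ, b, b′. -/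
open MeasureTheory

section CutoffScalingProof
open Real Complex FourierTransform

/-- The `H^s(ℝ)` Sobolev norm defined via the Fourier transform. -/
noncomputable def sobolevNorm (s : ℝ) (f : ℝ → ℂ) : ℝ :=
  (∫ ξ : ℝ, (1 + ξ ^ 2) ^ s * ‖FourierTransform.fourier f ξ‖ ^ 2) ^ ((1 : ℝ) / 2)

set_option maxHeartbeats 1000000 in
theorem cutoff_scaling (ψ : ℝ → ℂ) (hψ : ContDiff ℝ (⊤ : ℕ∞) ψ) (hsupp : HasCompactSupport ψ)
    (b b' : ℝ) (hb : b < 1 / 2) (hbb' : b' < b) (hb' : 0 ≤ b') :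
    ∃ C > 0, ∀ δ : ℝ, 0 < δ → δ ≤ 1 →
      sobolevNorm (1 / 2 - (b - b')) (fun t => ψ (t / δ)) ≤ C * δ ^ (b - b') := by
  set d : ℝ := b - b' with hd_def
  set s : ℝ := 1 / 2 - d with hs_def
  have hd0 : 0 < d := sub_pos.2 hbb'
  have hd2 : d < 1 / 2 := by simp only [hd_def]; linarith
  have hs0 : 0 < s := by simp only [hs_def]; linarith
  have hs1 : s ≤ 1 := by simp only [hs_def]; linarith
  -- integrability of all derivatives of ψ
  have hint : ∀ n : ℕ, Integrable (iteratedDeriv n ψ) := by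
    intro n
    have hs : HasCompactSupport (iteratedDeriv n ψ) := by
      rw [iteratedDeriv_eq_iterate]
      induction n with
      | zero => simpa using hsupp
      | succ k ih => simpa [Function.iterate_succ_apply'] using ih.deriv
    exact (hψ.continuous_iteratedDeriv n (by exact_mod_cast le_top)).integrable_of_hasCompactSupport hs
  have hψ0 : Integrable ψ := by simpa using hint 0
  set A : ℝ := ∫ x, ‖ψ x‖ with hA_def
  set B : ℝ := ∫ x, ‖iteratedDeriv 2 ψ x‖ with hB_def
  set K : ℝ := A + B with hK_def
  have hA0 : 0 ≤ A := integral_nonneg fun x => norm_nonneg _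
  have hB0 : 0 ≤ B := integral_nonneg fun x => norm_nonneg _
  have hK0 : 0 ≤ K := by positivity
  -- decay bound for 𝓕 ψ
  have h2eq : FourierTransform.fourier (iteratedDeriv 2 ψ) =
      fun x : ℝ => ((2 * π * I * x) ^ 2 : ℂ) • FourierTransform.fourier ψ x :=
    Real.fourier_iteratedDeriv (N := ⊤) (hψ.of_le (by simp)) (fun n _ => hint n) le_top
  have hbound : ∀ ξ : ℝ, (1 + ξ ^ 2) * ‖FourierTransform.fourier ψ ξ‖ ≤ K := by
    intro ξ
    have h1 : ‖FourierTransform.fourier ψ ξ‖ ≤ A :=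
      VectorFourier.norm_fourierIntegral_le_integral_norm _ _ _ _ _
    have h2 : ‖FourierTransform.fourier (iteratedDeriv 2 ψ) ξ‖ ≤ B :=
      VectorFourier.norm_fourierIntegral_le_integral_norm _ _ _ _ _
    have h3 : ‖FourierTransform.fourier (iteratedDeriv 2 ψ) ξ‖ =
        (2 * π * |ξ|) ^ 2 * ‖FourierTransform.fourier ψ ξ‖ := by
      rw [h2eq]
      simp only [norm_smul, norm_pow, norm_mul, Complex.norm_I,
        Complex.norm_real, Complex.norm_ofNat, Real.norm_eq_abs,
        _root_.abs_of_nonneg Real.pi_nonneg]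
      ring
    have hπ : (3 : ℝ) < π := Real.pi_gt_three
    have hn : 0 ≤ ‖FourierTransform.fourier ψ ξ‖ := norm_nonneg _
    have h4 : ξ ^ 2 * ‖FourierTransform.fourier ψ ξ‖ ≤ B := by
      have : ξ ^ 2 * ‖FourierTransform.fourier ψ ξ‖ ≤
          (2 * π * |ξ|) ^ 2 * ‖FourierTransform.fourier ψ ξ‖ := by
        apply mul_le_mul_of_nonneg_right _ hn
        have : ξ ^ 2 = |ξ| ^ 2 := (_root_.sq_abs ξ).symm
        rw [this, mul_pow, mul_pow]
        nlinarith [hπ, sq_nonneg |ξ|, sq_nonneg (π - 3)]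
      linarith [h3 ▸ h2]
    have : (1 + ξ ^ 2) * ‖FourierTransform.fourier ψ ξ‖ =
        ‖FourierTransform.fourier ψ ξ‖ + ξ ^ 2 * ‖FourierTransform.fourier ψ ξ‖ := by ring
    rw [this, hK_def]; exact add_le_add h1 h4
  -- the weight function for ψ itself
  set G : ℝ → ℝ := fun η => (1 + η ^ 2) ^ s * ‖FourierTransform.fourier ψ η‖ ^ 2 with hG_def
  have hGnn : ∀ η, 0 ≤ G η := by
    intro η
    apply mul_nonneg (Real.rpow_nonneg (by positivity) _) (by positivity)
  have hGle : ∀ η : ℝ, G η ≤ K ^ 2 * (1 + η ^ 2)⁻¹ := by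
    intro η
    have hu : (0:ℝ) < 1 + η ^ 2 := by positivity
    have hu1 : (1:ℝ) ≤ 1 + η ^ 2 := by nlinarith [sq_nonneg η]
    have step1 : G η ≤ (1 + η ^ 2) * ‖FourierTransform.fourier ψ η‖ ^ 2 := by
      have : (1 + η ^ 2) ^ s ≤ (1 + η ^ 2) ^ (1:ℝ) :=
        Real.rpow_le_rpow_of_exponent_le hu1 hs1
      rw [Real.rpow_one] at this
      exact mul_le_mul_of_nonneg_right this (by positivity)
    have hsq : ((1 + η ^ 2) * ‖FourierTransform.fourier ψ η‖) ^ 2 ≤ K ^ 2 :=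
      pow_le_pow_left₀ (by positivity) (hbound η) 2
    have step2 : (1 + η ^ 2) * ‖FourierTransform.fourier ψ η‖ ^ 2 ≤ K ^ 2 * (1 + η ^ 2)⁻¹ := by
      have heq : (1 + η ^ 2) * ‖FourierTransform.fourier ψ η‖ ^ 2 =
          ((1 + η ^ 2) * ‖FourierTransform.fourier ψ η‖) ^ 2 / (1 + η ^ 2) := by
        field_simp
      rw [heq, ← div_eq_mul_inv]
      exact (div_le_div_iff_of_pos_right hu).mpr hsq
    exact le_trans step1 step2
  -- integrability of G
  have hFcont : Continuous (FourierTransform.fourier ψ) :=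
    VectorFourier.fourierIntegral_continuous Real.continuous_fourierChar
      (by exact continuous_inner) hψ0
  have hGcont : Continuous G := by
    apply Continuous.mul
    · exact Continuous.rpow_const (by continuity) (fun x => Or.inr hs0.le)
    · exact (hFcont.norm).pow 2
  have hGint : Integrable G := by
    refine ((integrable_inv_one_add_sq.const_mul (K ^ 2)).mono' hGcont.aestronglyMeasurable ?_)
    filter_upwards with η
    rw [Real.norm_eq_abs, _root_.abs_of_nonneg (hGnn η)]
    exact hGle η
  set M : ℝ := ∫ η, G η with hM_def
  have hM0 : 0 ≤ M := integral_nonneg hGnn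
  refine ⟨M ^ ((1:ℝ)/2) + 1, by positivity, ?_⟩
  intro δ hδ hδ1
  have hδne : δ ≠ 0 := ne_of_gt hδ
  -- Fourier scaling
  have hscale : ∀ ξ : ℝ, FourierTransform.fourier (fun t => ψ (t / δ)) ξ
      = δ • FourierTransform.fourier ψ (δ * ξ) := by
    intro ξ
    rw [Real.fourier_real_eq, Real.fourier_real_eq]
    calc (∫ v : ℝ, 𝐞 (-(v * ξ)) • ψ (v / δ))
        = ∫ v : ℝ, (fun u : ℝ => 𝐞 (-(u * (δ * ξ))) • ψ u) (v / δ) := by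
          congr 1; ext v
          have h : -(v / δ * (δ * ξ)) = -(v * ξ) := by field_simp
          simp only [h]
      _ = |δ| • ∫ u : ℝ, 𝐞 (-(u * (δ * ξ))) • ψ u := by
          exact MeasureTheory.Measure.integral_comp_div
            (fun u : ℝ => 𝐞 (-(u * (δ * ξ))) • ψ u) δ
      _ = δ • ∫ u : ℝ, 𝐞 (-(u * (δ * ξ))) • ψ u := by rw [_root_.abs_of_pos hδ]
  -- pointwise bound
  have hpt : ∀ ξ : ℝ, (1 + ξ ^ 2) ^ s * ‖FourierTransform.fourier (fun t => ψ (t / δ)) ξ‖ ^ 2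
      ≤ δ ^ ((1:ℝ) + 2 * d) * G (δ * ξ) := by
    intro ξ
    rw [hscale ξ, norm_smul, Real.norm_eq_abs, _root_.abs_of_pos hδ, mul_pow]
    have hes : δ ^ ((1:ℝ) + 2 * d) * (δ ^ 2) ^ s = δ ^ 2 := by
      rw [← Real.rpow_natCast δ 2, ← Real.rpow_mul hδ.le, ← Real.rpow_add hδ]
      congr 1
      push_cast
      rw [hs_def]
      ring
    have h1 : δ ^ 2 * (1 + ξ ^ 2) ≤ 1 + (δ * ξ) ^ 2 := by nlinarith [sq_nonneg ξ, sq_nonneg δ]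
    have h2 : (δ ^ 2 * (1 + ξ ^ 2)) ^ s ≤ (1 + (δ * ξ) ^ 2) ^ s :=
      Real.rpow_le_rpow (by positivity) h1 hs0.le
    have h3 : (δ ^ 2 * (1 + ξ ^ 2)) ^ s = (δ ^ 2) ^ s * (1 + ξ ^ 2) ^ s :=
      Real.mul_rpow (by positivity) (by positivity)
    have key : (1 + ξ ^ 2) ^ s * δ ^ 2 ≤ δ ^ ((1:ℝ) + 2 * d) * (1 + (δ * ξ) ^ 2) ^ s := by
      calc (1 + ξ ^ 2) ^ s * δ ^ 2
          = δ ^ ((1:ℝ) + 2 * d) * ((δ ^ 2) ^ s * (1 + ξ ^ 2) ^ s) := by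
            conv_rhs => rw [← mul_assoc, hes]
            ring
        _ = δ ^ ((1:ℝ) + 2 * d) * (δ ^ 2 * (1 + ξ ^ 2)) ^ s := by rw [h3]
        _ ≤ δ ^ ((1:ℝ) + 2 * d) * (1 + (δ * ξ) ^ 2) ^ s := by
            exact mul_le_mul_of_nonneg_left h2 (Real.rpow_nonneg hδ.le _)
    calc (1 + ξ ^ 2) ^ s * (δ ^ 2 * ‖FourierTransform.fourier ψ (δ * ξ)‖ ^ 2)
        = ((1 + ξ ^ 2) ^ s * δ ^ 2) * ‖FourierTransform.fourier ψ (δ * ξ)‖ ^ 2 := by ring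
      _ ≤ (δ ^ ((1:ℝ) + 2 * d) * (1 + (δ * ξ) ^ 2) ^ s) *
            ‖FourierTransform.fourier ψ (δ * ξ)‖ ^ 2 :=
          mul_le_mul_of_nonneg_right key (by positivity)
      _ = δ ^ ((1:ℝ) + 2 * d) * G (δ * ξ) := by rw [hG_def]; ring
  -- integral bound
  have hI0 : ∀ ξ : ℝ, 0 ≤ (1 + ξ ^ 2) ^ s *
      ‖FourierTransform.fourier (fun t => ψ (t / δ)) ξ‖ ^ 2 := by
    intro ξ
    exact mul_nonneg (Real.rpow_nonneg (by positivity) _) (by positivity)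
  have hint2 : Integrable (fun ξ : ℝ => δ ^ ((1:ℝ) + 2 * d) * G (δ * ξ)) :=
    (hGint.comp_mul_left' hδne).const_mul _
  have hIle : (∫ ξ : ℝ, (1 + ξ ^ 2) ^ s *
        ‖FourierTransform.fourier (fun t => ψ (t / δ)) ξ‖ ^ 2)
      ≤ ∫ ξ : ℝ, δ ^ ((1:ℝ) + 2 * d) * G (δ * ξ) :=
    integral_mono_of_nonneg (Filter.Eventually.of_forall hI0) hint2
      (Filter.Eventually.of_forall hpt)
  have hInt_eq : (∫ ξ : ℝ, δ ^ ((1:ℝ) + 2 * d) * G (δ * ξ)) = δ ^ (2 * d) * M := by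
    rw [integral_const_mul]
    have : (∫ ξ : ℝ, G (δ * ξ)) = |δ⁻¹| • ∫ η, G η :=
      MeasureTheory.Measure.integral_comp_mul_left G δ
    rw [this, _root_.abs_of_pos (inv_pos.2 hδ), smul_eq_mul, ← hM_def]
    rw [← mul_assoc]
    congr 1
    rw [← Real.rpow_neg_one δ, ← Real.rpow_add hδ]
    congr 1; ring
  -- conclusion
  rw [sobolevNorm]
  have hfin : (∫ ξ : ℝ, (1 + ξ ^ 2) ^ s *
        ‖FourierTransform.fourier (fun t => ψ (t / δ)) ξ‖ ^ 2) ^ ((1:ℝ)/2)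
      ≤ (δ ^ (2 * d) * M) ^ ((1:ℝ)/2) :=
    Real.rpow_le_rpow (integral_nonneg hI0) (hIle.trans (le_of_eq hInt_eq)) (by norm_num)
  refine hfin.trans ?_
  rw [Real.mul_rpow (Real.rpow_nonneg hδ.le _) hM0, ← Real.rpow_mul hδ.le]
  have : 2 * d * ((1:ℝ)/2) = d := by ring
  rw [this]
  have hδd : 0 ≤ δ ^ d := Real.rpow_nonneg hδ.le _
  nlinarith [hδd, hM0, Real.rpow_nonneg hM0 ((1:ℝ)/2)]

end CutoffScalingProof
end
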